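/- Let λ > 0 and let f be analytic on the unit disk with f(0)=0, f'(0)=1. If |z² f''(z) + z f'(z) - f(z)| ≤ 3λ for all z in the disk, then |z f'(z) - f(z)| < λ for all z in the disk, i.e., f ∈ Ω_λ. -/

import Mathlib

/-!
Put `h(z) = z f'(z) - f(z)`, so that
`(z h(z))' = h(z) + z h'(z) = z² f''(z) + z f'(z) - f(z) =: u(z)`.
Since `h(0) = h'(0) = 0`, `u` vanishes to second order at `0`, and the Schwarz lemma turns
`|u| ≤ 3λ` into `|u(w)| ≤ 3λ|w|²`. Integrating `(z h)' = u` along the segment `[0, z]` gives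
`|z h(z)| ≤ λ|z|³`, i.e. `|h(z)| ≤ λ|z|² < λ`.
-/

open Metric Complex

open Set Topology

theorem norm_le_mul_div_sq_of_hasDerivAt_zero {u : ℂ → ℂ} {M R : ℝ} {z : ℂ}
    (hu : DifferentiableOn ℂ u (ball 0 R)) (hu0 : u 0 = 0) (hu' : HasDerivAt u 0 0)
    (hM : ∀ w ∈ ball (0 : ℂ) R, ‖u w‖ ≤ M) (hz : z ∈ ball (0 : ℂ) R) :
    ‖u z‖ ≤ M * (‖z‖ / R) ^ 2 := by
  have hmaps : MapsTo u (ball 0 R) (closedBall (u 0) M) := fun w hw ↦ by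
    simpa [hu0] using hM w hw
  have hsmall : (u · - u 0) =o[𝓝 0] (fun w ↦ ‖w - 0‖ ^ 1) := by
    simpa [hu0] using hu'.isLittleO.norm_right
  simpa [hu0] using dist_le_mul_div_pow_of_mapsTo_ball_of_isLittleO hu hmaps hsmall hz

theorem norm_le_of_hasDerivAt_of_norm_le_mul_pow {G g : ℂ → ℂ} {C r : ℝ} {n : ℕ} {z : ℂ}
    (hG0 : G 0 = 0) (hG : ∀ w ∈ ball (0 : ℂ) r, HasDerivAt G (g w) w)
    (hg : ∀ w ∈ ball (0 : ℂ) r, ‖g w‖ ≤ C * ‖w‖ ^ n) (hz : z ∈ ball (0 : ℂ) r) :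
    ‖G z‖ ≤ C * ‖z‖ ^ (n + 1) / (n + 1) := by
  have hray : ∀ t ∈ Icc (0 : ℝ) 1, (t : ℂ) * z ∈ ball (0 : ℂ) r := fun t ht ↦ by
    rw [mem_ball_zero_iff, norm_mul, norm_real, Real.norm_of_nonneg ht.1]
    exact (mul_le_of_le_one_left (norm_nonneg z) ht.2).trans_lt (mem_ball_zero_iff.mp hz)
  have hderiv : ∀ t ∈ Icc (0 : ℝ) 1,
      HasDerivAt (fun t : ℝ ↦ G (t * z)) (g (t * z) * z) t := fun t ht ↦
    (((hG _ (hray t ht)).comp (t : ℂ) ((hasDerivAt_id (t : ℂ)).mul_const z)).comp_ofReal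
      ).congr_deriv (by simp)
  have hB : ∀ t : ℝ, HasDerivAt (fun t ↦ C * ‖z‖ ^ (n + 1) * t ^ (n + 1) / (n + 1))
      (C * ‖z‖ ^ (n + 1) * t ^ n) t := fun t ↦
    (((hasDerivAt_pow (n + 1) t).const_mul (C * ‖z‖ ^ (n + 1))).div_const ((n : ℝ) + 1)
      ).congr_deriv (by rw [Nat.add_sub_cancel]; push_cast; field_simp)
  have := image_norm_le_of_norm_deriv_right_le_deriv_boundary
    (fun t ht ↦ (hderiv t ht).continuousAt.continuousWithinAt)
    (fun t ht ↦ (hderiv t (Ico_subset_Icc_self ht)).hasDerivWithinAt)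
    (by simp [hG0]) hB ?_ (right_mem_Icc.mpr zero_le_one)
  · simpa using this
  intro t ht
  have ht0 : 0 ≤ t := ht.1
  calc ‖g (t * z) * z‖ ≤ C * ‖(t : ℂ) * z‖ ^ n * ‖z‖ := by
        rw [norm_mul]
        gcongr
        exact hg _ (hray t (Ico_subset_Icc_self ht))
    _ = C * ‖z‖ ^ (n + 1) * t ^ n := by
        rw [norm_mul, norm_real, Real.norm_of_nonneg ht0]
        ring

theorem norm_le_div_three_mul_sq_of_norm_add_mul_deriv_le {h : ℂ → ℂ} {M : ℝ} {z : ℂ}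
    (hh : DifferentiableOn ℂ h (ball 0 1)) (h0 : h 0 = 0) (h0' : deriv h 0 = 0)
    (hM : ∀ w ∈ ball (0 : ℂ) 1, ‖h w + w * deriv h w‖ ≤ M) (hz : z ∈ ball (0 : ℂ) 1) :
    ‖h z‖ ≤ M / 3 * ‖z‖ ^ 2 := by
  set u : ℂ → ℂ := fun w ↦ h w + w * deriv h w
  have hh' : DifferentiableOn ℂ (deriv h) (ball 0 1) := hh.deriv isOpen_ball
  have hdiff : ∀ w ∈ ball (0 : ℂ) 1, DifferentiableAt ℂ h w := fun w hw ↦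
    hh.differentiableAt (isOpen_ball.mem_nhds hw)
  have hu : DifferentiableOn ℂ u (ball 0 1) := hh.add (differentiableOn_id.mul hh')
  have hu' : HasDerivAt u 0 0 :=
    ((hdiff 0 (mem_ball_self one_pos)).hasDerivAt.add ((hasDerivAt_id' (0 : ℂ)).mul
      (hh'.differentiableAt (isOpen_ball.mem_nhds (mem_ball_self one_pos))).hasDerivAt)).congr_deriv
      (by simp [h0'])
  have hu_sq : ∀ w ∈ ball (0 : ℂ) 1, ‖u w‖ ≤ M * ‖w‖ ^ 2 := fun w hw ↦ by
    simpa using norm_le_mul_div_sq_of_hasDerivAt_zero hu (by simp [u, h0]) hu' hM hw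
  have hG : ∀ w ∈ ball (0 : ℂ) 1, HasDerivAt (fun w ↦ w * h w) (u w) w := fun w hw ↦
    ((hasDerivAt_id w).mul (hdiff w hw).hasDerivAt).congr_deriv (by simp [u])
  have hzG := norm_le_of_hasDerivAt_of_norm_le_mul_pow (by simp) hG hu_sq hz
  rcases eq_or_ne z 0 with rfl | hz0
  · simp [h0]
  have hzpos : 0 < ‖z‖ := norm_pos_iff.mpr hz0
  rw [norm_mul] at hzG
  nlinarith

theorem hasDerivAt_mul_deriv_sub {𝕜 : Type*} [NontriviallyNormedField 𝕜] {f : 𝕜 → 𝕜} {w : 𝕜}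
    (hf : DifferentiableAt 𝕜 f w) (hf' : DifferentiableAt 𝕜 (deriv f) w) :
    HasDerivAt (fun z ↦ z * deriv f z - f z) (w * deriv (deriv f) w) w :=
  (((hasDerivAt_id' w).mul hf'.hasDerivAt).sub hf.hasDerivAt).congr_deriv (by ring)

theorem stmt_16_general (lam : ℝ) (hlam : 0 < lam) (f : ℂ → ℂ)
    (hf : DifferentiableOn ℂ f (ball (0:ℂ) 1))
    (hf0 : f 0 = 0)
    (hb : ∀ z ∈ ball (0:ℂ) 1,
      ‖z ^ 2 * deriv (deriv f) z + z * deriv f z - f z‖ ≤ 3 * lam) :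
    ∀ z ∈ ball (0:ℂ) 1, ‖z * deriv f z - f z‖ < lam := by
  have hf' : DifferentiableOn ℂ (deriv f) (ball 0 1) := hf.deriv isOpen_ball
  have hderiv : ∀ w ∈ ball (0 : ℂ) 1,
      deriv (fun z ↦ z * deriv f z - f z) w = w * deriv (deriv f) w := fun w hw ↦
    (hasDerivAt_mul_deriv_sub (hf.differentiableAt (isOpen_ball.mem_nhds hw))
      (hf'.differentiableAt (isOpen_ball.mem_nhds hw))).deriv
  intro z hz
  have hsq : ‖z * deriv f z - f z‖ ≤ 3 * lam / 3 * ‖z‖ ^ 2 := by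
    refine norm_le_div_three_mul_sq_of_norm_add_mul_deriv_le (h := fun z ↦ z * deriv f z - f z)
      ((differentiableOn_id.mul hf').sub hf)
      (by simp [hf0]) (by simp [hderiv 0 (mem_ball_self one_pos)]) (fun w hw ↦ ?_) hz
    rw [hderiv w hw]
    convert hb w hw using 2
    ring
  have hz1 : ‖z‖ ^ 2 < 1 := pow_lt_one₀ (norm_nonneg z) (mem_ball_zero_iff.mp hz) two_ne_zero
  calc ‖z * deriv f z - f z‖ ≤ lam * ‖z‖ ^ 2 := by simpa using hsq
    _ < lam := mul_lt_of_lt_one_right hlam hz1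

theorem stmt_16 (lam : ℝ) (hlam : 0 < lam) (f : ℂ → ℂ)
    (hf : DifferentiableOn ℂ f (ball (0:ℂ) 1))
    (hf0 : f 0 = 0) (hf1 : deriv f 0 = 1)
    (hb : ∀ z ∈ ball (0:ℂ) 1,
      ‖z ^ 2 * deriv (deriv f) z + z * deriv f z - f z‖ ≤ 3 * lam) :
    ∀ z ∈ ball (0:ℂ) 1, ‖z * deriv f z - f z‖ < lam :=
  stmt_16_general lam hlam f hf hf0 hb
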